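/- Let G be a strongly connected finite directed graph with error-labeled edges and maximal ratio τ. Then the limit as n → ∞ of the maximum over starting states and walks of length n of E(ϖ)/n equals τ. -/
import Mathlib


/-- `s` is a walk of length `n` in the graph with edge relation `A`. -/
def IsWalk {V : Type*} (A : V → V → Prop) (s : ℕ → V) (n : ℕ) : Prop :=
  ∀ i < n, A (s i) (s (i + 1))

/-- `s` is a simple cycle of length `l`. -/
def IsCycle {V : Type*} (A : V → V → Prop) (s : ℕ → V) (l : ℕ) : Prop :=
  0 < l ∧ IsWalk A s l ∧ s l = s 0 ∧ Function.Injective (fun i : Fin l => s i.val)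

/-- Number of error edges in the first `n` steps of the walk `s`. -/
def errCount {V : Type*} (lab : V → V → Bool) (s : ℕ → V) (n : ℕ) : ℕ :=
  ((Finset.range n).filter (fun i => lab (s i) (s (i + 1)) = true)).card


lemma errCount_congr {V : Type*} (lab : V → V → Bool) {s t : ℕ → V} {n : ℕ}
    (h : ∀ k ≤ n, s k = t k) : errCount lab s n = errCount lab t n := by
  unfold errCount
  congr 1
  apply Finset.filter_congr
  intro i hi
  rw [Finset.mem_range] at hi
  rw [h i hi.le, h (i+1) hi]

lemma errCount_succ {V : Type*} (lab : V → V → Bool) (s : ℕ → V) (n : ℕ) :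
    errCount lab s (n+1) = errCount lab s n + (if lab (s n) (s (n+1)) then 1 else 0) := by
  unfold errCount
  rw [Finset.range_add_one, Finset.filter_insert]
  split
  · rw [Finset.card_insert_of_notMem (by simp)]
  · simp

lemma errCount_add {V : Type*} (lab : V → V → Bool) (s : ℕ → V) (a b : ℕ) :
    errCount lab s (a + b) = errCount lab s a + errCount lab (fun t => s (a + t)) b := by
  induction b with
  | zero => simp [errCount]
  | succ b ih =>
    rw [← Nat.add_assoc, errCount_succ, ih, errCount_succ]
    simp only [show a + (b+1) = a + b + 1 from rfl]
    omega

lemma errCount_le {V : Type*} (lab : V → V → Bool) (s : ℕ → V) (n : ℕ) :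
    errCount lab s n ≤ n := by
  calc errCount lab s n ≤ (Finset.range n).card := Finset.card_filter_le _ _
  _ = n := Finset.card_range n

lemma errCount_mono {V : Type*} (lab : V → V → Bool) (s : ℕ → V) {m n : ℕ} (h : m ≤ n) :
    errCount lab s m ≤ errCount lab s n := by
  apply Finset.card_le_card
  exact Finset.filter_subset_filter _ (Finset.range_subset_range.2 h)

lemma upper_bound {V : Type*} [Fintype V] (A : V → V → Prop) (lab : V → V → Bool) (τ : ℝ)
    (hτ : 0 ≤ τ)
    (hub : ∀ (s : ℕ → V) (l : ℕ), IsCycle A s l → (errCount lab s l : ℝ) ≤ τ * l) :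
    ∀ (n : ℕ) (s : ℕ → V), IsWalk A s n →
      (errCount lab s n : ℝ) ≤ τ * n + Fintype.card V := by
  intro n
  induction n using Nat.strong_induction_on with
  | _ n IH =>
    intro s hs
    by_cases hinj : Function.Injective (fun i : Fin (n+1) => s i)
    · have hcard : n + 1 ≤ Fintype.card V := by
        simpa using Fintype.card_le_of_injective _ hinj
      have h1 : errCount lab s n ≤ n := errCount_le lab s n
      have h2 : (errCount lab s n : ℝ) ≤ n := by exact_mod_cast h1
      have h3 : (n:ℝ) + 1 ≤ Fintype.card V := by exact_mod_cast hcard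
      nlinarith [mul_nonneg hτ (Nat.cast_nonneg n)]
    · classical
      -- there exist distinct indices with equal values
      have hex : ∃ j, ∃ i < j, s i = s j ∧ j ≤ n := by
        simp only [Function.Injective, not_forall] at hinj
        obtain ⟨a, b, hab, hne⟩ := hinj
        rcases lt_or_gt_of_ne (fun h => hne (by exact_mod_cast h : a = b)) with h | h
        · exact ⟨b, a, h, hab, Nat.lt_succ_iff.1 b.isLt⟩
        · exact ⟨a, b, h, hab.symm, Nat.lt_succ_iff.1 a.isLt⟩
      set j := Nat.find hex with hj
      obtain ⟨i, hij, hsij, hjn⟩ := Nat.find_spec hex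
      have hmin : ∀ j' < j, ¬ ∃ i < j', s i = s j' ∧ j' ≤ n := fun j' h => Nat.find_min hex h
      set L := j - i with hL
      have hLpos : 0 < L := by omega
      have hiLj : i + L = j := by omega
      -- the simple cycle
      set c : ℕ → V := fun t => s (i + t) with hc
      have hcyc : IsCycle A c L := by
        refine ⟨hLpos, ?_, ?_, ?_⟩
        · intro k hk
          exact hs (i + k) (by omega)
        · show s (i + L) = s (i + 0)
          rw [hiLj, ← hsij]
          rfl
        · intro a b hab
          simp only [hc] at hab
          by_contra hne
          have hne' : (a:ℕ) ≠ (b:ℕ) := fun h => hne (Fin.ext h)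
          rcases lt_or_gt_of_ne hne' with h | h
          · exact hmin (i + b) (by omega) ⟨i + a, by omega, hab, by omega⟩
          · exact hmin (i + a) (by omega) ⟨i + b, by omega, hab.symm, by omega⟩
      -- the spliced walk
      set s' : ℕ → V := fun k => if k < i then s k else s (k + L) with hs'
      have hs'walk : IsWalk A s' (n - L) := by
        intro k hk
        by_cases h1 : k < i
        · have e1 : s' k = s k := if_pos h1
          have e2 : s' (k+1) = s (k+1) := by
            by_cases h2 : k + 1 < i
            · exact if_pos h2
            · have : k + 1 = i := by omega
              show (if k + 1 < i then s (k+1) else s (k+1+L)) = s (k+1)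
              rw [if_neg h2, this, hiLj, ← hsij]
          rw [e1, e2]
          exact hs k (by omega)
        · have e1 : s' k = s (k + L) := if_neg h1
          have e2 : s' (k+1) = s (k + L + 1) := by
            show (if k + 1 < i then s (k+1) else s (k+1+L)) = s (k+L+1)
            rw [if_neg (by omega)]
            congr 1
            omega
          rw [e1, e2]
          exact hs (k + L) (by omega)
      -- counting identity
      have key : errCount lab s n = errCount lab s' (n - L) + errCount lab c L := by
        have en : errCount lab s n
            = errCount lab s i + (errCount lab c L + errCount lab (fun t => s (j + t)) (n - j)) := by
          have hn : n = i + (L + (n - j)) := by omega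
          rw [show errCount lab s n = errCount lab s (i + (L + (n - j))) by rw [← hn],
            errCount_add, errCount_add]
          congr 2
          apply errCount_congr
          intro t ht
          show s (i + (L + t)) = s (j + t)
          congr 1
          omega
        have en' : errCount lab s' (n - L)
            = errCount lab s i + errCount lab (fun t => s (j + t)) (n - j) := by
          have hn : n - L = i + (n - j) := by omega
          rw [hn, errCount_add]
          congr 1
          · apply errCount_congr
            intro k hk
            show (if k < i then s k else s (k + L)) = s k
            by_cases h1 : k < i
            · rw [if_pos h1]
            · rw [if_neg h1, show k = i from by omega, hiLj, ← hsij]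
          · apply errCount_congr
            intro k hk
            show s' (i + k) = s (j + k)
            rw [hs']
            simp only [if_neg (by omega : ¬ i + k < i)]
            congr 1
            omega
        omega
      have ih := IH (n - L) (by omega) s' hs'walk
      have hc := hub c L hcyc
      have hcast : ((n - L : ℕ) : ℝ) = (n : ℝ) - L := by
        rw [Nat.cast_sub (by omega)]
      rw [key]
      push_cast
      rw [hcast] at ih
      have hLn : (L : ℝ) ≤ n := by exact_mod_cast (by omega : L ≤ n)
      nlinarith

lemma lower_bound {V : Type*} (A : V → V → Prop) (lab : V → V → Bool)
    {c : ℕ → V} {l : ℕ} (hcyc : IsCycle A c l) (n : ℕ) :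
    ∃ w : ℕ → V, IsWalk A w n ∧ (n / l) * errCount lab c l ≤ errCount lab w n := by
  obtain ⟨hl, hw, hcl, hinj⟩ := hcyc
  refine ⟨fun k => c (k % l), ?_, ?_⟩
  · intro k _
    show A (c (k % l)) (c ((k+1) % l))
    have h1 : k % l < l := Nat.mod_lt _ hl
    have hdm := Nat.div_add_mod k l
    have hk2 : k + 1 = (k % l + 1) + l * (k / l) := by omega
    have e : (k+1) % l = (k % l + 1) % l := by
      rw [hk2, Nat.add_mul_mod_self_left]
    by_cases h2 : k % l + 1 < l
    · rw [e, Nat.mod_eq_of_lt h2]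
      exact hw _ h1
    · have h3 : k % l + 1 = l := by omega
      rw [e, h3, Nat.mod_self, ← hcl]
      have h4 := hw _ h1
      rw [h3] at h4
      exact h4
  · have hper : ∀ q : ℕ, errCount lab (fun k => c (k % l)) (q * l) = q * errCount lab c l := by
      intro q
      induction q with
      | zero => simp [errCount]
      | succ q ih =>
        rw [Nat.succ_mul, errCount_add, ih]
        have : errCount lab (fun t => c ((q * l + t) % l)) l = errCount lab c l := by
          apply errCount_congr
          intro k hk
          show c ((q * l + k) % l) = c k
          rw [Nat.mul_comm q l, Nat.mul_add_mod]
          rcases Nat.lt_or_ge k l with h | h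
          · rw [Nat.mod_eq_of_lt h]
          · have hkl : k = l := by omega
            rw [hkl, Nat.mod_self, ← hcl]
        rw [this]
        ring
    calc (n / l) * errCount lab c l = errCount lab (fun k => c (k % l)) (n / l * l) := (hper _).symm
    _ ≤ errCount lab (fun k => c (k % l)) n := errCount_mono _ _ (Nat.div_mul_le_self n l)

theorem stmt3 {V : Type*} [Fintype V] [Nonempty V]
    (A : V → V → Prop) (lab : V → V → Bool)
    (hsc : ∀ u v : V, ∃ (m : ℕ) (s : ℕ → V), IsWalk A s m ∧ s 0 = u ∧ s m = v)
    (hout : ∀ v : V, ∃ v', A v v')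
    (τ : ℝ)
    (hub : ∀ (s : ℕ → V) (l : ℕ), IsCycle A s l → (errCount lab s l : ℝ) ≤ τ * l)
    (hach : ∃ (s : ℕ → V) (l : ℕ), IsCycle A s l ∧ (errCount lab s l : ℝ) = τ * l) :
    Filter.Tendsto
      (fun n : ℕ =>
        ((sSup {e : ℕ | ∃ s : ℕ → V, IsWalk A s n ∧ errCount lab s n = e} : ℕ) : ℝ) / n)
      Filter.atTop (nhds τ) := by
  classical
  obtain ⟨c, l, hcyc, hach⟩ := hach
  have hl : 0 < l := hcyc.1
  have hτ0 : 0 ≤ τ := by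
    have h0 : (0:ℝ) ≤ (errCount lab c l : ℝ) := Nat.cast_nonneg _
    rw [hach] at h0
    have hlR : (0:ℝ) < l := by exact_mod_cast hl
    nlinarith
  set M : ℕ → ℕ := fun n => sSup {e : ℕ | ∃ s : ℕ → V, IsWalk A s n ∧ errCount lab s n = e}
    with hM
  -- a default infinite walk exists
  obtain ⟨d, hd⟩ : ∃ d : ℕ → V, ∀ k, A (d k) (d (k+1)) :=
    ⟨fun k => Nat.rec (Classical.arbitrary V) (fun _ v => (hout v).choose) k,
     fun k => (hout _).choose_spec⟩
  have hbdd : ∀ n, BddAbove {e : ℕ | ∃ s : ℕ → V, IsWalk A s n ∧ errCount lab s n = e} := by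
    intro n
    refine ⟨n, fun e he => ?_⟩
    obtain ⟨s, _, rfl⟩ := he
    exact errCount_le lab s n
  have hne : ∀ n, {e : ℕ | ∃ s : ℕ → V, IsWalk A s n ∧ errCount lab s n = e}.Nonempty :=
    fun n => ⟨errCount lab d n, d, fun i _ => hd i, rfl⟩
  have hmem : ∀ n, M n ∈ {e : ℕ | ∃ s : ℕ → V, IsWalk A s n ∧ errCount lab s n = e} :=
    fun n => Nat.sSup_mem (hne n) (hbdd n)
  have hup : ∀ n : ℕ, (M n : ℝ) ≤ τ * n + Fintype.card V := by
    intro n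
    obtain ⟨s, hs, he⟩ := hmem n
    rw [← he]
    exact upper_bound A lab τ hτ0 hub n s hs
  have hlo : ∀ n : ℕ, τ * n - τ * l ≤ (M n : ℝ) := by
    intro n
    obtain ⟨w, hw, hwe⟩ := lower_bound A lab hcyc n
    have h1 : errCount lab w n ≤ M n := le_csSup (hbdd n) ⟨w, hw, rfl⟩
    have h2 : (n / l : ℕ) * (errCount lab c l : ℝ) ≤ M n := by
      calc ((n / l : ℕ) : ℝ) * (errCount lab c l : ℝ)
          = ((n / l * errCount lab c l : ℕ) : ℝ) := by push_cast; ring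
        _ ≤ (errCount lab w n : ℝ) := by exact_mod_cast hwe
        _ ≤ M n := by exact_mod_cast h1
    rw [hach] at h2
    have h3 : (n : ℝ) - l ≤ ((n / l : ℕ) : ℝ) * l := by
      have := Nat.lt_div_mul_add hl (a := n)
      have : n < n / l * l + l := this
      have h4 : (n : ℝ) < ((n / l * l + l : ℕ) : ℝ) := by exact_mod_cast this
      push_cast at h4
      linarith
    nlinarith [mul_le_mul_of_nonneg_left h3 hτ0]
  -- squeeze
  have hconv1 : Filter.Tendsto (fun n : ℕ => τ - τ * l / n) Filter.atTop (nhds τ) := by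
    have := tendsto_const_div_atTop_nhds_zero_nat (τ * l)
    simpa using (tendsto_const_nhds (α := ℕ) (x := τ)).sub this
  have hconv2 : Filter.Tendsto (fun n : ℕ => τ + (Fintype.card V : ℝ) / n) Filter.atTop (nhds τ) := by
    have := tendsto_const_div_atTop_nhds_zero_nat ((Fintype.card V : ℝ))
    simpa using (tendsto_const_nhds (α := ℕ) (x := τ)).add this
  refine tendsto_of_tendsto_of_tendsto_of_le_of_le' hconv1 hconv2 ?_ ?_
  · filter_upwards [Filter.eventually_ge_atTop 1] with n hn
    have hnpos : (0:ℝ) < n := by exact_mod_cast hn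
    calc τ - τ * l / n = (τ * n - τ * l) / n := by field_simp
      _ ≤ (M n : ℝ) / n := by gcongr ?_ / n; exact hlo n
  · filter_upwards [Filter.eventually_ge_atTop 1] with n hn
    have hnpos : (0:ℝ) < n := by exact_mod_cast hn
    calc (M n : ℝ) / n ≤ (τ * n + Fintype.card V) / n := by gcongr ?_ / n; exact hup n
      _ = τ + (Fintype.card V : ℝ) / n := by field_simp
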